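/- The three binary qubit observables X_t(±) = ½(1 ± tσ_x), Y_t(±) = ½(1 ± tσ_y), Z_t(±) = ½(1 ± tσ_z) are incompatible (admit no joint POVM) whenever t > 1/√3. -/

import Mathlib

/-! If `G` were a joint observable, indexed by sign vectors `g ∈ {±1}³`, its marginals would
give `∑_g G(g) (g · σ) = ∑_i t σ_i² = 3t`, of trace `6t`. But `(g · σ)² = 3`, so
`√3 - g · σ ≥ 0` and `tr (G(g) (g · σ)) ≤ √3 tr G(g)`; summing over `g` gives
`6t ≤ 2√3`. -/

open scoped BigOperators ComplexOrder
open Matrix Finset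

abbrev Mat (d : ℕ) := Matrix (Fin d) (Fin d) ℂ

/-- A POVM with finite outcome set `Ω`. -/
def IsPOVM {d : ℕ} {Ω : Type} [Fintype Ω] (A : Ω → Mat d) : Prop :=
  (∀ a, (A a).PosSemidef) ∧ ∑ a, A a = 1

/-- `G` is a joint observable for the family `A` of POVMs. -/
def IsJoint {d n : ℕ} {Ω : Fin n → Type} [∀ i, Fintype (Ω i)] [∀ i, DecidableEq (Ω i)]
    (A : ∀ i, Ω i → Mat d) (G : (∀ i, Ω i) → Mat d) : Prop :=
  IsPOVM G ∧ ∀ (i : Fin n) (a : Ω i), ∑ g ∈ univ.filter (fun g => g i = a), G g = A i a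

/-- The POVMs `A i` are compatible (jointly measurable). -/
def Compatible {d n : ℕ} {Ω : Fin n → Type} [∀ i, Fintype (Ω i)] [∀ i, DecidableEq (Ω i)]
    (A : ∀ i, Ω i → Mat d) : Prop :=
  ∃ G, IsJoint A G

noncomputable def sigmaX : Mat 2 := !![0, 1; 1, 0]
noncomputable def sigmaY : Mat 2 := !![0, -Complex.I; Complex.I, 0]
noncomputable def sigmaZ : Mat 2 := !![1, 0; 0, -1]

/-- The noisy binary spin observable `½(1 ± tσ)` (outcome `true` is `+`). -/
noncomputable def noisySpin (t : ℝ) (σ : Mat 2) (ε : Bool) : Mat 2 :=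
  (1 / 2 : ℂ) • ((1 : Mat 2) + (if ε then (t : ℂ) else -(t : ℂ)) • σ)

section PosSemidef

variable {n 𝕜 : Type*} [Fintype n] [RCLike 𝕜]

lemma Matrix.PosSemidef.trace_mul_nonneg [DecidableEq n] {A B : Matrix n n 𝕜}
    (hA : A.PosSemidef) (hB : B.PosSemidef) : 0 ≤ (A * B).trace := by
  obtain ⟨C, rfl⟩ : ∃ C : Matrix n n 𝕜, B = Cᴴ * C := by
    open scoped MatrixOrder in
    exact ⟨CFC.sqrt B, by
      rw [(CFC.sqrt_nonneg B).posSemidef.1.eq, CFC.sqrt_mul_sqrt_self B hB.nonneg]⟩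
  rw [← Matrix.mul_assoc, trace_mul_cycle]
  exact (hA.mul_mul_conjTranspose_same C).trace_nonneg

lemma Matrix.PosSemidef.trace_mul_le [DecidableEq n] {A S : Matrix n n 𝕜} {c : 𝕜}
    (hA : A.PosSemidef) (hS : (c • 1 - S).PosSemidef) : (A * S).trace ≤ c * A.trace := by
  have := hA.trace_mul_nonneg hS
  rwa [Matrix.mul_sub, Matrix.mul_smul, Matrix.mul_one, trace_sub, trace_smul, smul_eq_mul,
    sub_nonneg] at this

lemma Matrix.IsHermitian.posSemidef_of_mul_self_eq_smul {M : Matrix n n 𝕜} (hM : M.IsHermitian)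
    {r : ℝ} (hr : 0 < r) (h : M * M = (r : 𝕜) • M) : M.PosSemidef := by
  have hM' : M = (r⁻¹ : ℝ) • (Mᴴ * M) := by
    rw [hM.eq, h, ← RCLike.real_smul_eq_coe_smul, smul_smul, inv_mul_cancel₀ hr.ne', one_smul]
  rw [hM']
  exact (posSemidef_conjTranspose_mul_self M).smul (inv_nonneg.mpr hr.le)

lemma Matrix.IsHermitian.posSemidef_smul_one_sub [DecidableEq n] {S : Matrix n n 𝕜}
    (hS : S.IsHermitian) {c : ℝ} (hc : 0 < c) (h : S * S = ((c ^ 2 : ℝ) : 𝕜) • 1) :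
    ((c : 𝕜) • 1 - S).PosSemidef := by
  have hM : ((c : 𝕜) • 1 - S).IsHermitian :=
    (isHermitian_one.smul (RCLike.conj_ofReal c)).sub hS
  refine hM.posSemidef_of_mul_self_eq_smul (mul_pos two_pos hc) ?_
  -- `(c - S)² = 2c (c - S)` because `S² = c²`
  simp only [Matrix.sub_mul, Matrix.mul_sub, Matrix.smul_mul, Matrix.mul_smul, Matrix.one_mul,
    Matrix.mul_one, h]
  push_cast
  module

end PosSemidef

lemma IsJoint.sum_smul_eq {d n : ℕ} {Ω : Fin n → Type} [∀ i, Fintype (Ω i)]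
    [∀ i, DecidableEq (Ω i)] {A : ∀ i, Ω i → Mat d} {G : (∀ i, Ω i) → Mat d}
    (hG : IsJoint A G) (i : Fin n) (f : Ω i → ℂ) :
    ∑ g, f (g i) • G g = ∑ a, f a • A i a := by
  rw [← sum_fiberwise univ (fun g => g i)]
  refine sum_congr rfl fun a _ => ?_
  rw [← hG.2 i a, smul_sum]
  exact sum_congr rfl fun g hg => by rw [(mem_filter.mp hg).2]

lemma noisySpin_true_sub_false (t : ℝ) (σ : Mat 2) :
    noisySpin t σ true - noisySpin t σ false = (t : ℂ) • σ := by
  simp only [noisySpin, if_true, Bool.false_eq_true, if_false]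
  module

noncomputable def pauli : Fin 3 → Mat 2 := ![sigmaX, sigmaY, sigmaZ]

lemma pauli_mul_self (i : Fin 3) : pauli i * pauli i = 1 := by
  fin_cases i <;>
  · ext a b
    fin_cases a <;> fin_cases b <;>
      simp [pauli, sigmaX, sigmaY, sigmaZ, mul_apply, Fin.sum_univ_two]

lemma isHermitian_pauli (i : Fin 3) : (pauli i).IsHermitian := by
  fin_cases i <;>
  · ext a b
    fin_cases a <;> fin_cases b <;> simp [pauli, sigmaX, sigmaY, sigmaZ]

noncomputable def blochMatrix (a : Fin 3 → ℝ) : Mat 2 := ∑ i, (a i : ℂ) • pauli i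

lemma isHermitian_blochMatrix (a : Fin 3 → ℝ) : (blochMatrix a).IsHermitian :=
  isSelfAdjoint_sum _ fun i _ => (isHermitian_pauli i).smul (Complex.conj_ofReal (a i))

lemma blochMatrix_mul_self (a : Fin 3 → ℝ) :
    blochMatrix a * blochMatrix a = ((∑ i, a i ^ 2 : ℝ) : ℂ) • 1 := by
  have h : blochMatrix a = !![(a 2 : ℂ), a 0 - Complex.I * a 1; a 0 + Complex.I * a 1, -a 2] := by
    ext i j
    fin_cases i <;> fin_cases j <;>
      simp [blochMatrix, Fin.sum_univ_three, pauli, sigmaX, sigmaY, sigmaZ] <;> ring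
  rw [h, Fin.sum_univ_three]
  ext i j
  fin_cases i <;> fin_cases j <;>
    simp [mul_apply, Fin.sum_univ_two] <;> ring_nf <;> simp [Complex.I_sq]

lemma posSemidef_smul_one_sub_blochMatrix {a : Fin 3 → ℝ} {r : ℝ} (hr : 0 < r)
    (ha : ∑ i, a i ^ 2 = r ^ 2) : ((r : ℂ) • 1 - blochMatrix a).PosSemidef :=
  (isHermitian_blochMatrix a).posSemidef_smul_one_sub hr (by rw [blochMatrix_mul_self, ha]; rfl)

def boolSign (b : Bool) : ℝ := if b then 1 else -1

lemma boolSign_sq (b : Bool) : boolSign b ^ 2 = 1 := by cases b <;> norm_num [boolSign]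

lemma IsJoint.sum_mul_blochMatrix_boolSign {t : ℝ} {G : (Fin 3 → Bool) → Mat 2}
    (hG : IsJoint (Ω := fun _ => Bool) (fun i => noisySpin t (pauli i)) G) :
    ∑ g, G g * blochMatrix (fun i => boolSign (g i)) = ((3 * t : ℝ) : ℂ) • 1 := by
  have hmarg (i : Fin 3) : ∑ g, (boolSign (g i) : ℂ) • G g = (t : ℂ) • pauli i := by
    rw [hG.sum_smul_eq i (fun b => (boolSign b : ℂ)), Fintype.sum_bool,
      ← noisySpin_true_sub_false t (pauli i)]
    simp only [boolSign, if_true, Bool.false_eq_true, if_false]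
    push_cast
    module
  calc ∑ g, G g * blochMatrix (fun i => boolSign (g i))
      = ∑ i, (∑ g, (boolSign (g i) : ℂ) • G g) * pauli i := by
        simp only [blochMatrix, Finset.mul_sum, Matrix.sum_mul, Matrix.mul_smul, Matrix.smul_mul]
        exact sum_comm
    _ = ((3 * t : ℝ) : ℂ) • 1 := by
        simp only [hmarg, Matrix.smul_mul, pauli_mul_self, sum_const, card_univ, Fintype.card_fin]
        push_cast
        module

theorem noisy_orthogonal_triple_incompatible_general (t : ℝ)
    (ht : 1 / Real.sqrt 3 < t) :
    ¬ Compatible (n := 3) (Ω := fun _ => Bool)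
      (fun i => noisySpin t (![sigmaX, sigmaY, sigmaZ] i)) := by
  rintro ⟨G, hG⟩
  have hS (g : Fin 3 → Bool) :
      (((√3 : ℝ) : ℂ) • 1 - blochMatrix (fun i => boolSign (g i))).PosSemidef :=
    posSemidef_smul_one_sub_blochMatrix (by positivity) (by simp [boolSign_sq])
  have hle : ((6 * t : ℝ) : ℂ) ≤ ((2 * √3 : ℝ) : ℂ) :=
    calc ((6 * t : ℝ) : ℂ) = (∑ g, G g * blochMatrix (fun i => boolSign (g i))).trace := by
          rw [hG.sum_mul_blochMatrix_boolSign, trace_smul, trace_one, Fintype.card_fin]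
          push_cast
          ring
      _ = ∑ g, (G g * blochMatrix (fun i => boolSign (g i))).trace := trace_sum _ _
      _ ≤ ∑ g, ((√3 : ℝ) : ℂ) * (G g).trace :=
          sum_le_sum fun g _ => (hG.1.1 g).trace_mul_le (hS g)
      _ = ((2 * √3 : ℝ) : ℂ) := by
          rw [← Finset.mul_sum, ← trace_sum, hG.1.2, trace_one, Fintype.card_fin]
          push_cast
          ring
  have h3t : 3 * t ≤ √3 := by linarith [Complex.real_le_real.mp hle]
  rw [div_lt_iff₀ (by positivity)] at ht
  nlinarith [mul_le_mul_of_nonneg_right h3t (Real.sqrt_nonneg 3),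
    Real.mul_self_sqrt (show (0 : ℝ) ≤ 3 by norm_num)]

/-- The three noisy orthogonal qubit spin observables
`½(1 ± tσ_x), ½(1 ± tσ_y), ½(1 ± tσ_z)` are incompatible whenever `t > 1/√3`. -/
theorem noisy_orthogonal_triple_incompatible (t : ℝ) (ht1 : t ≤ 1)
    (ht : 1 / Real.sqrt 3 < t) :
    ¬ Compatible (n := 3) (Ω := fun _ => Bool)
      (fun i => noisySpin t (![sigmaX, sigmaY, sigmaZ] i)) :=
  noisy_orthogonal_triple_incompatible_general t ht
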